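/- Let ‖·‖ be a norm on ℝ^n and let E = { ξ ∈ ℝ^n : ‖ξ‖ = 1 } be its unit sphere, regarded as a subset of ℂ^n. Then ‖ζ‖_c ≤ Ψ_E(ζ) for every ζ ∈ ℂ^n, and ‖ζ‖_c = Ψ_E(ζ) for every ζ ∈ ℂℝ^n = { zξ : z ∈ ℂ, ξ ∈ ℝ^n }, where ‖·‖_c is the cross norm on ℂ^n associated to ‖·‖. -/

import Mathlib

open scoped ENNReal RealInnerProductSpace BigOperators
open Filter MeasureTheory

noncomputable section

/-- ℂⁿ with the hermitian (euclidean) norm. -/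
abbrev Cn (n : ℕ) := EuclideanSpace ℂ (Fin n)
/-- ℝⁿ with the euclidean norm. -/
abbrev Rn (n : ℕ) := EuclideanSpace ℝ (Fin n)

/-- The inclusion ℝⁿ ⊆ ℂⁿ. -/
def toCn {n : ℕ} (x : Rn n) : Cn n := WithLp.toLp 2 (fun i => (x i : ℂ))

/-- Evaluation of a polynomial on ℂⁿ at a point of ℂⁿ. -/
def evalP {n : ℕ} (p : MvPolynomial (Fin n) ℂ) (ζ : Cn n) : ℂ :=
  MvPolynomial.eval (fun i => ζ i) p

/-- Siciak's homogeneous extremal function with weight `γ`: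
`Ψ_{E,γ}(ζ) = sup{ |p(ζ)|^{1/k} : p homogeneous of degree k ≥ 1, |p|^{1/k} ≤ γ on E }`. -/
def siciak {n : ℕ} (E : Set (Cn n)) (γ : Cn n → ℝ) (ζ : Cn n) : ℝ≥0∞ :=
  ⨆ (p : MvPolynomial (Fin n) ℂ) (k : ℕ) (_ : p.IsHomogeneous k) (_ : 1 ≤ k)
    (_ : ∀ ξ ∈ E, ‖evalP p ξ‖ ^ (1 / (k : ℝ)) ≤ γ ξ),
    ENNReal.ofReal (‖evalP p ζ‖ ^ (1 / (k : ℝ)))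

/-- The upper semicontinuous regularization `Ψ^*(ζ) = limsup_{ϑ → ζ} Ψ(ϑ)`. -/
def siciakStar {n : ℕ} (E : Set (Cn n)) (γ : Cn n → ℝ) (ζ : Cn n) : ℝ≥0∞ :=
  Filter.limsup (siciak E γ) (nhds ζ)

/-- `E` has positive homogeneous capacity in the sense of Siciak:
`Ψ_E^*` is bounded above on the unit sphere of ℂⁿ. -/
def PosHomCapacity {n : ℕ} (E : Set (Cn n)) : Prop :=
  ∃ M : ℝ, ∀ ζ : Cn n, ‖ζ‖ = 1 → siciakStar E (fun _ => 1) ζ ≤ ENNReal.ofReal M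

end

noncomputable section

/-- The cross norm on ℂⁿ associated to a norm `ν` on ℝⁿ. -/
def crossNorm {n : ℕ} (ν : Rn n → ℝ) (ζ : Cn n) : ℝ :=
  sInf { s : ℝ | ∃ (N : ℕ) (α : Fin N → ℂ) (ω : Fin N → Rn n),
    ζ = ∑ j, α j • toCn (ω j) ∧ s = ∑ j, ‖α j‖ * ν (ω j) }

/-! `ν_c ≤ Ψ_E` is Hahn–Banach: `ν_c` is a complex seminorm on `ℂⁿ`, so for every `ζ` some
complex linear form `ℓ` satisfies `|ℓ| ≤ ν_c` and `ℓ ζ = ν_c ζ`. As `ν_c ≤ ν` on `ℝⁿ`, `|ℓ| ≤ 1`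
on `E`, and `ℓ` is a homogeneous polynomial of degree one, whence `ν_c ζ = |ℓ ζ| ≤ Ψ_E ζ`.

On `ℂℝⁿ` equality holds because `ν_c (z x) = |z| ν x` (taking real parts in a representation
`x = ∑ αⱼ ωⱼ` gives `ν x ≤ ∑ |αⱼ| ν ωⱼ`), while homogeneity gives `|p (z ξ)|^{1/k} ≤ |z|` for
`ξ ∈ E` and every `p` admissible in the definition of `Ψ_E`. -/

open MvPolynomial

theorem MvPolynomial.IsHomogeneous.eval_smul {R σ : Type*} [CommSemiring R]
    {φ : MvPolynomial σ R} {k : ℕ} (hφ : φ.IsHomogeneous k) (c : R) (x : σ → R) :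
    eval (c • x) φ = c ^ k * eval x φ := by
  rw [eval_eq, eval_eq, Finset.mul_sum]
  refine Finset.sum_congr rfl fun d hd => ?_
  have hd : ∑ i ∈ d.support, d i = k := by
    rw [← Finsupp.degree_apply, Finsupp.degree_eq_weight_one]
    exact hφ (mem_support_iff.mp hd)
  simp only [Pi.smul_apply, smul_eq_mul, mul_pow, Finset.prod_mul_distrib,
    Finset.prod_pow_eq_pow_sum, hd]
  ring

theorem Seminorm.exists_dual_norm_le_and_apply_eq {𝕜 E : Type*} [RCLike 𝕜] [AddCommGroup E]
    [Module 𝕜 E] (p : Seminorm 𝕜 E) (x : E) :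
    ∃ g : Module.Dual 𝕜 E, (∀ y, ‖g y‖ ≤ p y) ∧ g x = p x := by
  let f := LinearPMap.mkSpanSingleton' x (p x : 𝕜) fun c hc => by
    rw [RingHom.id_apply, smul_eq_mul, ← norm_eq_zero, norm_mul, RCLike.norm_ofReal,
      abs_of_nonneg (apply_nonneg p x), ← map_smul_eq_mul, hc, map_zero]
  obtain ⟨g, hgf, hgp⟩ := Module.Dual.exists_extension_of_le_seminorm f.domain f.toFun
    (p := p) <| by
      rintro ⟨y, hy⟩
      obtain ⟨c, rfl⟩ := Submodule.mem_span_singleton.mp hy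
      rw [LinearPMap.toFun_eq_coe, LinearPMap.mkSpanSingleton'_apply, RingHom.id_apply,
        norm_smul, RCLike.norm_ofReal, abs_of_nonneg (apply_nonneg p x), map_smul_eq_mul]
  exact ⟨g, hgp, (hgf ⟨x, Submodule.mem_span_singleton_self x⟩).trans
    (LinearPMap.mkSpanSingleton'_apply_self _ _ _ _)⟩

section Euclidean

variable {n : ℕ}

theorem evalP_smul {p : MvPolynomial (Fin n) ℂ} {k : ℕ} (hp : p.IsHomogeneous k) (c : ℂ)
    (ζ : Cn n) : evalP p (c • ζ) = c ^ k * evalP p ζ :=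
  hp.eval_smul c fun i => ζ i

theorem exists_isHomogeneous_one_evalP_eq (ℓ : Cn n →ₗ[ℂ] ℂ) :
    ∃ P : MvPolynomial (Fin n) ℂ, P.IsHomogeneous 1 ∧ ∀ ζ, evalP P ζ = ℓ ζ := by
  let b := (EuclideanSpace.basisFun (Fin n) ℂ).toBasis
  refine ⟨ℓ.toMvPolynomial b (Module.Basis.singleton Unit ℂ) (),
    ℓ.toMvPolynomial_isHomogeneous _ _ _, fun ζ => ?_⟩
  have hrepr : ⇑(b.repr ζ) = fun i => ζ i := funext fun i => by simp [b]
  simpa [evalP, hrepr] using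
    ℓ.toMvPolynomial_eval_eq_apply b (Module.Basis.singleton Unit ℂ) () (b.repr ζ)

section Siciak

variable {E : Set (Cn n)} {γ : Cn n → ℝ}

theorem le_siciak {p : MvPolynomial (Fin n) ℂ} {k : ℕ} (hp : p.IsHomogeneous k) (hk : 1 ≤ k)
    (hE : ∀ ξ ∈ E, ‖evalP p ξ‖ ^ (1 / (k : ℝ)) ≤ γ ξ) (ζ : Cn n) :
    ENNReal.ofReal (‖evalP p ζ‖ ^ (1 / (k : ℝ))) ≤ siciak E γ ζ :=
  le_iSup_of_le p <| le_iSup_of_le k <| le_iSup_of_le hp <| le_iSup_of_le hk <|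
    le_iSup_of_le hE le_rfl

theorem ofReal_norm_le_siciak (ℓ : Cn n →ₗ[ℂ] ℂ) (hE : ∀ ξ ∈ E, ‖ℓ ξ‖ ≤ γ ξ) (ζ : Cn n) :
    ENNReal.ofReal ‖ℓ ζ‖ ≤ siciak E γ ζ := by
  obtain ⟨P, hP, hPℓ⟩ := exists_isHomogeneous_one_evalP_eq ℓ
  simpa [hPℓ] using le_siciak hP le_rfl (by simpa [hPℓ] using hE) ζ

theorem siciak_zero : siciak E γ 0 = 0 := by
  refine le_antisymm (iSup_le fun p => iSup_le fun k => iSup_le fun hp => iSup_le fun hk =>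
    iSup_le fun _ => ?_) zero_le
  rw [← zero_smul ℂ (0 : Cn n), evalP_smul hp, zero_pow (by omega), zero_mul, norm_zero,
    Real.zero_rpow (by positivity), ENNReal.ofReal_zero]

theorem siciak_smul_le_of_mem {ξ : Cn n} (hξ : ξ ∈ E) (c : ℂ) :
    siciak E γ (c • ξ) ≤ ENNReal.ofReal (‖c‖ * γ ξ) := by
  refine iSup_le fun p => iSup_le fun k => iSup_le fun hp => iSup_le fun hk =>
    iSup_le fun hE => ENNReal.ofReal_le_ofReal ?_
  rw [evalP_smul hp, norm_mul, norm_pow, Real.mul_rpow (by positivity) (norm_nonneg _),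
    one_div, Real.pow_rpow_inv_natCast (norm_nonneg c) (by omega), ← one_div]
  exact mul_le_mul_of_nonneg_left (hE ξ hξ) (norm_nonneg c)

end Siciak

theorem toCn_zero : toCn (0 : Rn n) = 0 := by
  ext i; simp [toCn]

theorem toCn_smul (c : ℝ) (x : Rn n) : toCn (c • x) = (c : ℂ) • toCn x := by
  ext i; simp [toCn]

theorem eq_sum_smul_toCn_single (ζ : Cn n) :
    ζ = ∑ i, ζ i • toCn (EuclideanSpace.single i 1) := by
  ext j; simp [toCn, PiLp.single_apply, apply_ite Complex.ofReal]

def reCn (ζ : Cn n) : Rn n := WithLp.toLp 2 fun i => (ζ i).re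

theorem reCn_toCn (x : Rn n) : reCn (toCn x) = x := by
  ext i; simp [reCn, toCn]

theorem reCn_sum_smul_toCn {N : ℕ} (α : Fin N → ℂ) (ω : Fin N → Rn n) :
    reCn (∑ j, α j • toCn (ω j)) = ∑ j, (α j).re • ω j := by
  ext i; simp [reCn, toCn]

section CrossNorm

variable (p : Seminorm ℝ (Rn n))

theorem crossNorm_le_of_eq_sum {ζ : Cn n} {N : ℕ} {α : Fin N → ℂ} {ω : Fin N → Rn n}
    (h : ζ = ∑ j, α j • toCn (ω j)) : crossNorm p ζ ≤ ∑ j, ‖α j‖ * p (ω j) := by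
  refine csInf_le ⟨0, ?_⟩ ⟨N, α, ω, h, rfl⟩
  rintro s ⟨N, α, ω, -, rfl⟩
  exact Finset.sum_nonneg fun j _ => mul_nonneg (norm_nonneg _) (apply_nonneg p _)

theorem le_crossNorm {ζ : Cn n} {a : ℝ}
    (h : ∀ (N : ℕ) (α : Fin N → ℂ) (ω : Fin N → Rn n),
      ζ = ∑ j, α j • toCn (ω j) → a ≤ ∑ j, ‖α j‖ * p (ω j)) :
    a ≤ crossNorm p ζ := by
  refine le_csInf ⟨_, n, _, _, eq_sum_smul_toCn_single ζ, rfl⟩ ?_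
  rintro s ⟨N, α, ω, hζ, rfl⟩
  exact h N α ω hζ

theorem crossNorm_nonneg (ζ : Cn n) : 0 ≤ crossNorm p ζ :=
  le_crossNorm p fun _ _ _ _ =>
    Finset.sum_nonneg fun _ _ => mul_nonneg (norm_nonneg _) (apply_nonneg p _)

theorem crossNorm_smul_le (z : ℂ) (ζ : Cn n) :
    crossNorm p (z • ζ) ≤ ‖z‖ * crossNorm p ζ := by
  rcases eq_or_ne z 0 with rfl | hz
  · simpa using crossNorm_le_of_eq_sum p (α := Fin.elim0) (ω := Fin.elim0) (by simp)
  have hz' : 0 < ‖z‖ := norm_pos_iff.mpr hz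
  rw [← div_le_iff₀' hz']
  refine le_crossNorm p fun N α ω hζ => ?_
  rw [div_le_iff₀' hz', Finset.mul_sum]
  refine (crossNorm_le_of_eq_sum p (α := fun j => z * α j) (ω := ω) ?_).trans_eq ?_
  · simp [hζ, Finset.smul_sum, smul_smul]
  · simp [mul_assoc]

theorem crossNorm_zero : crossNorm p 0 = 0 :=
  le_antisymm (by simpa using crossNorm_smul_le p 0 0) (crossNorm_nonneg p 0)

theorem crossNorm_add_le (ζ ϑ : Cn n) :
    crossNorm p (ζ + ϑ) ≤ crossNorm p ζ + crossNorm p ϑ := by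
  rw [← sub_le_iff_le_add]
  refine le_crossNorm p fun N α ω hζ => ?_
  rw [sub_le_comm]
  refine le_crossNorm p fun M β τ hϑ => ?_
  rw [sub_le_iff_le_add']
  refine (crossNorm_le_of_eq_sum p (α := Fin.append α β) (ω := Fin.append ω τ) ?_).trans_eq ?_
  · simp [Fin.sum_univ_add, hζ, hϑ]
  · simp [Fin.sum_univ_add]

def crossSeminorm : Seminorm ℂ (Cn n) :=
  Seminorm.ofSMulLE (crossNorm p) (crossNorm_zero p) (crossNorm_add_le p) (crossNorm_smul_le p)

theorem coe_crossSeminorm : ⇑(crossSeminorm p) = crossNorm p := rfl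

theorem apply_reCn_le_crossNorm (ζ : Cn n) : p (reCn ζ) ≤ crossNorm p ζ := by
  refine le_crossNorm p fun N α ω hζ => ?_
  rw [hζ, reCn_sum_smul_toCn]
  refine (Finset.le_sum_of_subadditive p (map_zero p).le (map_add_le_add p) _ _).trans ?_
  refine Finset.sum_le_sum fun j _ => ?_
  rw [map_smul_eq_mul, Real.norm_eq_abs]
  exact mul_le_mul_of_nonneg_right (Complex.abs_re_le_norm _) (apply_nonneg p _)

theorem crossNorm_toCn (x : Rn n) : crossNorm p (toCn x) = p x := by
  refine le_antisymm ?_ (by simpa [reCn_toCn] using apply_reCn_le_crossNorm p (toCn x))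
  simpa using crossNorm_le_of_eq_sum p (α := fun _ : Fin 1 => 1) (ω := fun _ => x) (by simp)

theorem crossNorm_smul_toCn (z : ℂ) (x : Rn n) : crossNorm p (z • toCn x) = ‖z‖ * p x := by
  rw [← coe_crossSeminorm, map_smul_eq_mul, coe_crossSeminorm, crossNorm_toCn]

theorem ofReal_crossNorm_le_siciak (ζ : Cn n) :
    ENNReal.ofReal (crossNorm p ζ) ≤ siciak (toCn '' {x | p x = 1}) (fun _ => 1) ζ := by
  obtain ⟨ℓ, hℓ, hℓζ⟩ := (crossSeminorm p).exists_dual_norm_le_and_apply_eq ζ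
  have hE : ∀ ξ ∈ toCn '' {x | p x = 1}, ‖ℓ ξ‖ ≤ 1 := by
    rintro _ ⟨x, hx, rfl⟩
    exact (hℓ _).trans_eq ((crossNorm_toCn p x).trans hx)
  calc ENNReal.ofReal (crossNorm p ζ) = ENNReal.ofReal ‖ℓ ζ‖ := by
        rw [hℓζ, coe_crossSeminorm, RCLike.norm_ofReal, abs_of_nonneg (crossNorm_nonneg p ζ)]
    _ ≤ _ := ofReal_norm_le_siciak ℓ hE ζ

theorem siciak_smul_toCn_le (hp : ∀ x, p x = 0 → x = 0) (z : ℂ) (x : Rn n) :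
    siciak (toCn '' {x | p x = 1}) (fun _ => 1) (z • toCn x) ≤
      ENNReal.ofReal (crossNorm p (z • toCn x)) := by
  rcases eq_or_ne x 0 with rfl | hx
  · simp [toCn_zero, siciak_zero]
  have hpx : 0 < p x := (apply_nonneg p x).lt_of_ne' (mt (hp x) hx)
  have hξ : toCn ((p x)⁻¹ • x) ∈ toCn '' {x | p x = 1} :=
    ⟨_, by simp [map_smul_eq_mul, abs_of_pos hpx, hpx.ne'], rfl⟩
  have hζ : z • toCn x = (z * p x) • toCn ((p x)⁻¹ • x) := by
    rw [toCn_smul, smul_smul, mul_assoc, Complex.ofReal_inv,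
      mul_inv_cancel₀ (Complex.ofReal_ne_zero.mpr hpx.ne'), mul_one]
  rw [crossNorm_smul_toCn, hζ]
  refine (siciak_smul_le_of_mem (γ := fun _ => 1) hξ _).trans_eq ?_
  rw [mul_one, norm_mul, Complex.norm_real, Real.norm_of_nonneg hpx.le]

end CrossNorm

end Euclidean

/-- Proposition 2.5 (Siciak, Drużkowski): if `E` is the unit sphere of a norm `ν` on ℝⁿ,
then `ν_c ≤ Ψ_E` on ℂⁿ with equality on `ℂℝⁿ`. -/
theorem siciak_of_real_unit_sphere {n : ℕ} (ν : Rn n → ℝ)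
    (hν1 : ∀ (c : ℝ) (x : Rn n), ν (c • x) = |c| * ν x)
    (hν2 : ∀ x y : Rn n, ν (x + y) ≤ ν x + ν y)
    (hν3 : ∀ x : Rn n, ν x = 0 → x = 0) :
    (∀ ζ : Cn n,
      ENNReal.ofReal (crossNorm ν ζ) ≤
        siciak (toCn '' {x : Rn n | ν x = 1}) (fun _ => 1) ζ) ∧
    (∀ ζ : Cn n, (∃ (z : ℂ) (x : Rn n), ζ = z • toCn x) →
      ENNReal.ofReal (crossNorm ν ζ) =
        siciak (toCn '' {x : Rn n | ν x = 1}) (fun _ => 1) ζ) := by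
  obtain ⟨p, rfl⟩ : ∃ p : Seminorm ℝ (Rn n), ⇑p = ν :=
    ⟨Seminorm.of ν hν2 fun c x => by rw [hν1, Real.norm_eq_abs], rfl⟩
  refine ⟨ofReal_crossNorm_le_siciak p, ?_⟩
  rintro _ ⟨z, x, rfl⟩
  exact le_antisymm (ofReal_crossNorm_le_siciak p _) (siciak_smul_toCn_le p hν3 z x)
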